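/- Let λ ≥ 2 be a cardinal and suppose the λ-polycyclic monoid P_λ is a proper dense inverse subsemigroup of a topological inverse semigroup S (with the subspace topology on P_λ). Then for every x ∈ S \ P_λ, either x·x⁻¹ ∈ S \ P_λ or x⁻¹·x ∈ S \ P_λ. -/

import Mathlib

/-!
The nonzero idempotents `b⁻¹b` of `P_λ` are isolated among the idempotents of `P_λ` inside `S`.
Indeed, for a letter `g` the idempotent `t = (gb)⁻¹(gb)` lies strictly below `e = b⁻¹b`, and every
idempotent `z` of `P_λ` satisfies `zt ∈ {t, z, 0}`, with `zt = t` for only finitely many `z`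
(those `u⁻¹u` with `u` a suffix of `gb`); by continuity of `s ↦ s · t` and the Hausdorff property,
idempotents `z` near `e` must then be `e` itself.

Now let `x ∈ S` with `xx⁻¹ = b⁻¹b` and `x⁻¹x = c⁻¹c` in `P_λ` (neither can be `0`: by density
`0` stays a zero of `S`, which would force `x = 0`). Every `y ∈ P_λ` close to `x` has `yy⁻¹` close
to `b⁻¹b` and `y⁻¹y` close to `c⁻¹c`, hence equal to them, so `y = b⁻¹c`. As `P_λ` is dense and
`S` is Hausdorff, `x = b⁻¹c ∈ P_λ`.
-/

universe u v

/-- An inverse semigroup: every element has a unique (von Neumann) inverse. -/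
class InverseSemigroup (S : Type u) extends Semigroup S, Inv S where
  mul_inv_mul : ∀ a : S, a * a⁻¹ * a = a
  inv_mul_inv : ∀ a : S, a⁻¹ * a * a⁻¹ = a⁻¹
  inv_unique : ∀ a b : S, a * b * a = a → b * a * b = b → b = a⁻¹

/-- The λ-polycyclic monoid over the index type `ι` (of cardinality λ), realized as
`(M_λ × M_λ) ∪ {0}` where `M_λ = FreeMonoid ι` is the free monoid on λ generators;
the pair `(a, b)` encodes the element `a⁻¹b` and `none` is the zero. -/
abbrev PolyMon (ι : Type u) : Type u := Option (FreeMonoid ι × FreeMonoid ι)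

/-- The nonzero element `a⁻¹b` of the polycyclic monoid. -/
def polyEl {ι : Type u} (a b : FreeMonoid ι) : PolyMon ι := some (a, b)

instance {ι : Type u} : Zero (PolyMon ι) := ⟨none⟩

instance {ι : Type u} : One (PolyMon ι) := ⟨polyEl 1 1⟩

open Classical in
/-- Multiplication of the polycyclic monoid:
`a⁻¹b · c⁻¹d = (c₁a)⁻¹d` if `c = c₁b`; `= a⁻¹(b₁d)` if `b = b₁c`; `= 0` otherwise,
and `0` is a two-sided zero. -/
noncomputable def polyMul {ι : Type u} (x y : PolyMon ι) : PolyMon ι :=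
  Option.bind x fun p => Option.bind y fun q =>
    if h : ∃ c₁ : FreeMonoid ι, q.1 = c₁ * p.2 then some (Classical.choose h * p.1, q.2)
    else if h' : ∃ b₁ : FreeMonoid ι, p.2 = b₁ * q.1 then some (p.1, Classical.choose h' * q.2)
    else none

noncomputable instance {ι : Type u} : Mul (PolyMon ι) := ⟨polyMul⟩

/-- Inversion of the polycyclic monoid: `(a⁻¹b)⁻¹ = b⁻¹a` and `0⁻¹ = 0`. -/
instance {ι : Type u} : Inv (PolyMon ι) :=
  ⟨fun x => Option.map (fun p => (p.2, p.1)) x⟩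

theorem FreeMonoid.finite_setOf_exists_eq_mul {ι : Type u} (a : FreeMonoid ι) :
    {s : FreeMonoid ι | ∃ c, a = c * s}.Finite := by
  refine ((List.finite_toSet a.toList.tails).image FreeMonoid.ofList).subset ?_
  rintro s ⟨c, rfl⟩
  exact ⟨s.toList, (List.mem_tails _ _).mpr ⟨c.toList, (FreeMonoid.toList_mul c s).symm⟩, rfl⟩

theorem IsIdempotentElem.of_injective_map {M : Type u} {S : Type v} [Mul M] [Mul S] {i : M → S}
    (hinj : Function.Injective i) (hmul : ∀ x y : M, i (x * y) = i x * i y) {z : M}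
    (hz : IsIdempotentElem (i z)) : IsIdempotentElem z :=
  hinj (by rw [hmul, hz.eq])

namespace InverseSemigroup

variable {S : Type v} [InverseSemigroup S]

theorem isIdempotentElem_mul_inv (x : S) : IsIdempotentElem (x * x⁻¹) := by
  rw [IsIdempotentElem, ← mul_assoc, mul_inv_mul]

theorem isIdempotentElem_inv_mul (x : S) : IsIdempotentElem (x⁻¹ * x) := by
  rw [IsIdempotentElem, ← mul_assoc, inv_mul_inv]

end InverseSemigroup

section Topology

variable {S : Type v} [TopologicalSpace S] [T2Space S]

theorem mul_eq_left_of_dense [Mul S] [ContinuousMul S] {D : Set S} (hD : Dense D) {a : S}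
    (h : ∀ y ∈ D, a * y = a) (s : S) : a * s = a :=
  congrFun (Continuous.ext_on hD (continuous_const.mul continuous_id) continuous_const h) s

theorem mul_eq_right_of_dense [Mul S] [ContinuousMul S] {D : Set S} (hD : Dense D) {a : S}
    (h : ∀ y ∈ D, y * a = a) (s : S) : s * a = a :=
  congrFun (Continuous.ext_on hD (continuous_id.mul continuous_const) continuous_const h) s

/- Near `e`, `z t` stays near `e t = t ≠ e`, which rules out `z t = z` and `z t = 0`; the finitely
many `z` with `z t = t` are removed by hand. -/
theorem exists_isOpen_forall_isIdempotentElem_eq {M : Type u} [Mul M] [Zero M] [Mul S]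
    [ContinuousMul S] (i : M → S) (hinj : Function.Injective i)
    (hmul : ∀ x y : M, i (x * y) = i x * i y) {e t : M} (het : e * t = t) (hte : t ≠ e)
    (ht : t ≠ 0) (hfin : {z : M | IsIdempotentElem z ∧ z * t = t}.Finite)
    (htri : ∀ z : M, IsIdempotentElem z → z * t = t ∨ z * t = z ∨ z * t = 0) :
    ∃ V : Set S, IsOpen V ∧ i e ∈ V ∧ ∀ z : M, IsIdempotentElem z → i z ∈ V → z = e := by
  obtain ⟨Y, Y', hY, hY', htY, heY', hYY'⟩ := t2_separation (hinj.ne hte)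
  have hcont : Continuous fun s : S => s * i t := continuous_id.mul continuous_const
  refine ⟨(Y' ∩ (fun s => s * i t) ⁻¹' (Y \ {i 0})) \
      i '' ({z | IsIdempotentElem z ∧ z * t = t} \ {e}),
    (hY'.inter (hcont.isOpen_preimage _ (hY.sdiff isClosed_singleton))).sdiff
      (hfin.sdiff.image i).isClosed, ⟨⟨heY', ?_, ?_⟩, ?_⟩, ?_⟩
  · simpa [← hmul, het] using htY
  · simpa [← hmul, het] using hinj.ne ht
  · rintro ⟨z, ⟨-, hz⟩, hiz⟩
    exact hz (hinj hiz)
  · rintro z hz ⟨⟨hzY', hztY, hzt0⟩, hzF⟩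
    simp only [Set.mem_singleton_iff, ← hmul] at hztY hzt0
    rcases htri z hz with hzt | hzt | hzt
    · by_contra hze
      exact hzF ⟨z, ⟨⟨hz, hzt⟩, hze⟩, rfl⟩
    · rw [hzt] at hztY
      exact (hYY'.ne_of_mem hztY hzY' rfl).elim
    · exact (hzt0 (by rw [hzt])).elim

end Topology

namespace PolyMon

variable {ι : Type u}

theorem zero_mul' (y : PolyMon ι) : 0 * y = 0 := rfl

theorem mul_zero' (y : PolyMon ι) : y * 0 = 0 := by
  cases y <;> rfl

theorem polyEl_mul_polyEl_of_eq_mul {u v w q c : FreeMonoid ι} (h : q = c * v) :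
    polyEl u v * polyEl q w = polyEl (c * u) w := by
  have hex : ∃ c₁, q = c₁ * v := ⟨c, h⟩
  show polyMul (some (u, v)) (some (q, w)) = some (c * u, w)
  rw [polyMul, Option.bind_some, Option.bind_some, dif_pos hex,
    mul_right_cancel ((Classical.choose_spec hex).symm.trans h)]

theorem mul_inv_polyEl (u v : FreeMonoid ι) : polyEl u v * (polyEl u v)⁻¹ = polyEl u u := by
  have h := polyEl_mul_polyEl_of_eq_mul (u := u) (w := u) (one_mul v).symm
  rwa [one_mul] at h

theorem inv_mul_polyEl (u v : FreeMonoid ι) : (polyEl u v)⁻¹ * polyEl u v = polyEl v v := by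
  have h := polyEl_mul_polyEl_of_eq_mul (u := v) (w := v) (one_mul u).symm
  rwa [one_mul] at h

theorem eq_polyEl_of_mul_inv {y : PolyMon ι} {a b : FreeMonoid ι}
    (h₁ : y * y⁻¹ = polyEl a a) (h₂ : y⁻¹ * y = polyEl b b) : y = polyEl a b := by
  rcases y with _ | ⟨u, v⟩
  · cases h₁
  · change polyEl u v * (polyEl u v)⁻¹ = _ at h₁
    change (polyEl u v)⁻¹ * polyEl u v = _ at h₂
    rw [mul_inv_polyEl] at h₁
    rw [inv_mul_polyEl] at h₂
    cases h₁
    cases h₂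
    rfl

open Classical in
theorem polyEl_mul_polyEl_self (u a : FreeMonoid ι) :
    polyEl u u * polyEl a a =
      if ∃ c, a = c * u then polyEl a a else if ∃ c, u = c * a then polyEl u u else 0 := by
  show polyMul (some (u, u)) (some (a, a)) = _
  rw [polyMul, Option.bind_some, Option.bind_some]
  split_ifs with h₁ h₂
  · rw [← Classical.choose_spec h₁]; rfl
  · rw [← Classical.choose_spec h₂]; rfl
  · rfl

theorem eq_zero_or_eq_polyEl_of_isIdempotentElem {z : PolyMon ι} (hz : IsIdempotentElem z) :
    z = 0 ∨ ∃ a, z = polyEl a a := by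
  rcases z with _ | ⟨u, v⟩
  · exact Or.inl rfl
  refine Or.inr ⟨u, ?_⟩
  change polyMul (some (u, v)) (some (u, v)) = some (u, v) at hz
  rw [polyMul, Option.bind_some, Option.bind_some] at hz
  split_ifs at hz with h₁ h₂
  · have hc : Classical.choose h₁ = 1 := mul_eq_right.mp (congrArg Prod.fst (Option.some.inj hz))
    obtain rfl : u = v := by simpa [hc] using Classical.choose_spec h₁
    rfl
  · have hc : Classical.choose h₂ = 1 := mul_eq_right.mp (congrArg Prod.snd (Option.some.inj hz))
    obtain rfl : v = u := by simpa [hc] using Classical.choose_spec h₂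
    rfl

theorem mul_polyEl_self_trichotomy {z : PolyMon ι} (hz : IsIdempotentElem z)
    (a : FreeMonoid ι) :
    z * polyEl a a = polyEl a a ∨ z * polyEl a a = z ∨ z * polyEl a a = 0 := by
  rcases eq_zero_or_eq_polyEl_of_isIdempotentElem hz with rfl | ⟨u, rfl⟩
  · exact Or.inr (Or.inl rfl)
  rw [polyEl_mul_polyEl_self]
  split_ifs <;> simp

theorem finite_setOf_isIdempotentElem_mul_polyEl_eq (a : FreeMonoid ι) :
    {z : PolyMon ι | IsIdempotentElem z ∧ z * polyEl a a = polyEl a a}.Finite := by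
  refine ((FreeMonoid.finite_setOf_exists_eq_mul a).image fun s => polyEl s s).subset ?_
  rintro z ⟨hz, hza⟩
  rcases eq_zero_or_eq_polyEl_of_isIdempotentElem hz with rfl | ⟨u, rfl⟩
  · cases hza
  refine ⟨u, ?_, rfl⟩
  rw [polyEl_mul_polyEl_self] at hza
  split_ifs at hza with h₁ h₂
  · exact h₁
  · obtain rfl : u = a := congrArg Prod.fst (Option.some.inj hza)
    exact ⟨1, (one_mul u).symm⟩
  · cases hza

variable {S : Type v} [TopologicalSpace S] [T2Space S]

theorem exists_isOpen_forall_isIdempotentElem_eq [Nonempty ι] [Mul S] [ContinuousMul S]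
    (i : PolyMon ι → S) (hinj : Function.Injective i)
    (hmul : ∀ x y : PolyMon ι, i (x * y) = i x * i y) (b : FreeMonoid ι) :
    ∃ V : Set S, IsOpen V ∧ i (polyEl b b) ∈ V ∧
      ∀ z : PolyMon ι, IsIdempotentElem z → i z ∈ V → z = polyEl b b := by
  obtain ⟨g⟩ := ‹Nonempty ι›
  refine _root_.exists_isOpen_forall_isIdempotentElem_eq i hinj hmul
    (t := polyEl (FreeMonoid.of g * b) (FreeMonoid.of g * b)) (polyEl_mul_polyEl_of_eq_mul rfl)
    ?_ nofun (finite_setOf_isIdempotentElem_mul_polyEl_eq _)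
    (fun z hz => mul_polyEl_self_trichotomy hz _)
  intro h
  exact FreeMonoid.of_ne_one g (mul_eq_right.mp (congrArg Prod.fst (Option.some.inj h)))

theorem eq_polyEl_of_mul_inv_of_dense [Nonempty ι] [InverseSemigroup S] [ContinuousMul S]
    [ContinuousInv S] (i : PolyMon ι → S) (hinj : Function.Injective i)
    (hmul : ∀ x y : PolyMon ι, i (x * y) = i x * i y)
    (hinv : ∀ x : PolyMon ι, i x⁻¹ = (i x)⁻¹) (hdense : Dense (Set.range i)) {x : S}
    {a b : FreeMonoid ι} (h₁ : x * x⁻¹ = i (polyEl a a)) (h₂ : x⁻¹ * x = i (polyEl b b)) :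
    x = i (polyEl a b) := by
  obtain ⟨Va, hVa, haVa, hVa_eq⟩ := exists_isOpen_forall_isIdempotentElem_eq i hinj hmul a
  obtain ⟨Vb, hVb, hbVb, hVb_eq⟩ := exists_isOpen_forall_isIdempotentElem_eq i hinj hmul b
  by_contra hx
  have hW : IsOpen ({s : S | s * s⁻¹ ∈ Va ∧ s⁻¹ * s ∈ Vb} \ {i (polyEl a b)}) :=
    ((hVa.preimage (continuous_id.mul continuous_inv)).inter
      (hVb.preimage (continuous_inv.mul continuous_id))).sdiff isClosed_singleton
  obtain ⟨_, ⟨y, rfl⟩, ⟨hya, hyb⟩, hy⟩ :=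
    hdense.exists_mem_open hW ⟨x, ⟨by rwa [h₁], by rwa [h₂]⟩, hx⟩
  rw [← hinv, ← hmul] at hya hyb
  have hyy : IsIdempotentElem (y * y⁻¹) := .of_injective_map hinj hmul <| by
    rw [hmul, hinv]; exact InverseSemigroup.isIdempotentElem_mul_inv _
  have hyy' : IsIdempotentElem (y⁻¹ * y) := .of_injective_map hinj hmul <| by
    rw [hmul, hinv]; exact InverseSemigroup.isIdempotentElem_inv_mul _
  exact hy (congrArg i (eq_polyEl_of_mul_inv (hVa_eq _ hyy hya) (hVb_eq _ hyy' hyb)))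

end PolyMon

theorem statement_8_general {ι : Type u} [Nontrivial ι]
    {S : Type v} [InverseSemigroup S] [TopologicalSpace S] [T2Space S]
    [ContinuousMul S] [ContinuousInv S]
    (i : PolyMon ι → S) (hinj : Function.Injective i)
    (hmul : ∀ x y : PolyMon ι, i (x * y) = i x * i y)
    (hinv : ∀ x : PolyMon ι, i x⁻¹ = (i x)⁻¹)
    (hdense : Dense (Set.range i)) :
    ∀ x : S, x ∉ Set.range i → x * x⁻¹ ∉ Set.range i ∨ x⁻¹ * x ∉ Set.range i := by
  intro x hx
  by_contra! ⟨⟨e, he⟩, ⟨f, hf⟩⟩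
  rcases PolyMon.eq_zero_or_eq_polyEl_of_isIdempotentElem (.of_injective_map hinj hmul
    (he ▸ InverseSemigroup.isIdempotentElem_mul_inv x)) with rfl | ⟨a, rfl⟩
  · refine hx ⟨0, ?_⟩
    rw [← InverseSemigroup.mul_inv_mul x, ← he, mul_eq_left_of_dense hdense]
    rintro _ ⟨y, rfl⟩
    rw [← hmul, PolyMon.zero_mul']
  rcases PolyMon.eq_zero_or_eq_polyEl_of_isIdempotentElem (.of_injective_map hinj hmul
    (hf ▸ InverseSemigroup.isIdempotentElem_inv_mul x)) with rfl | ⟨b, rfl⟩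
  · refine hx ⟨0, ?_⟩
    rw [← InverseSemigroup.mul_inv_mul x, mul_assoc, ← hf, mul_eq_right_of_dense hdense]
    rintro _ ⟨y, rfl⟩
    rw [← hmul, PolyMon.mul_zero']
  exact hx ⟨_, (PolyMon.eq_polyEl_of_mul_inv_of_dense i hinj hmul hinv hdense he.symm hf.symm).symm⟩

/-- If the λ-polycyclic monoid `P_λ` (λ ≥ 2) is a proper dense inverse subsemigroup of a
topological inverse semigroup `S`, then for every `x ∈ S \ P_λ`, either `x·x⁻¹ ∈ S \ P_λ`
or `x⁻¹·x ∈ S \ P_λ`. -/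
theorem statement_8 {ι : Type u} [Nontrivial ι]
    {S : Type v} [InverseSemigroup S] [TopologicalSpace S] [T2Space S]
    [ContinuousMul S] [ContinuousInv S]
    (i : PolyMon ι → S) (hinj : Function.Injective i)
    (hmul : ∀ x y : PolyMon ι, i (x * y) = i x * i y)
    (hinv : ∀ x : PolyMon ι, i x⁻¹ = (i x)⁻¹)
    (hdense : Dense (Set.range i)) (hproper : Set.range i ≠ Set.univ) :
    ∀ x : S, x ∉ Set.range i → x * x⁻¹ ∉ Set.range i ∨ x⁻¹ * x ∉ Set.range i :=
  statement_8_general i hinj hmul hinv hdense
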